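/- Given a short exact sequence 0 → P → N → M → 0 of R-modules, if M and P are S-coherent, then N is S-coherent. -/

import Mathlib

def IsSFinite {R : Type*} [CommRing R] (S : Submonoid R) (M : Type*) [AddCommGroup M]
    [Module R M] : Prop :=
  ∃ s ∈ S, ∃ N : Submodule R M, N.FG ∧ ∀ m : M, s • m ∈ N

def IsSFinitelyPresented {R : Type*} [CommRing R] (S : Submonoid R) (M : Type*)
    [AddCommGroup M] [Module R M] : Prop :=
  ∃ (n : ℕ) (f : (Fin n → R) →ₗ[R] M), Function.Surjective f ∧ IsSFinite S (LinearMap.ker f)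

/-- An `R`-module is `S`-coherent if it is finitely generated and every finitely generated
submodule is `S`-finitely presented. -/
def IsSCoherentModule {R : Type*} [CommRing R] (S : Submonoid R) (M : Type*)
    [AddCommGroup M] [Module R M] : Prop :=
  Module.Finite R M ∧ ∀ N : Submodule R M, N.FG → IsSFinitelyPresented S ↥N

/-!
Write a finitely generated `L ≤ N` as `φ(Rⁿ)`. Since `g(L) ≤ M` is `S`-finitely presented, the
kernel of `g ∘ φ` is `S`-finite: some `s₁ ∈ S` pushes `ker φ ≤ ker (g ∘ φ)` into a finitely
generated `K ≤ ker (g ∘ φ)`. Now `φ(K) ≤ ker g = f(P) ≅ P` is finitely generated, hence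
`S`-finitely presented, so `φ` restricted to `K` has `S`-finite kernel, and some `s₂ s₁` pushes
`ker φ` into a finitely generated submodule of it. Both steps use that `S`-finiteness of the
kernel does not depend on the chosen finite presentation.
-/

open Submodule LinearMap

section SFinite

variable {R : Type*} [CommRing R] (S : Submonoid R)

theorem isSFinite_submodule_iff {V : Type*} [AddCommGroup V] [Module R V] (K : Submodule R V) :
    IsSFinite S K ↔ ∃ s ∈ S, ∃ B ≤ K, B.FG ∧ ∀ x ∈ K, s • x ∈ B := by
  constructor
  · rintro ⟨s, hs, B, hBfg, hB⟩
    refine ⟨s, hs, B.map K.subtype, map_subtype_le _ _, hBfg.map _, fun x hx => ?_⟩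
    exact ⟨s • ⟨x, hx⟩, hB ⟨x, hx⟩, rfl⟩
  · rintro ⟨s, hs, B, hBK, hBfg, hB⟩
    refine ⟨s, hs, B.comap K.subtype, ?_, fun x => hB x x.2⟩
    refine fg_of_fg_map_injective K.subtype K.injective_subtype ?_
    rwa [map_comap_subtype, inf_eq_right.mpr hBK]

theorem isSFinite_map {V W : Type*} [AddCommGroup V] [Module R V] [AddCommGroup W] [Module R W]
    (q : V →ₗ[R] W) {K : Submodule R V} (hK : IsSFinite S K) : IsSFinite S (K.map q) := by
  obtain ⟨s, hs, B, hBK, hBfg, hB⟩ := (isSFinite_submodule_iff S K).1 hK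
  refine (isSFinite_submodule_iff S _).2 ⟨s, hs, B.map q, map_mono hBK, hBfg.map q, ?_⟩
  rintro _ ⟨x, hx, rfl⟩
  rw [← map_smul]
  exact mem_map_of_mem (hB x hx)

theorem IsSFinitelyPresented.of_linearEquiv {M M' : Type*} [AddCommGroup M] [Module R M]
    [AddCommGroup M'] [Module R M'] (e : M ≃ₗ[R] M') (hM : IsSFinitelyPresented S M) :
    IsSFinitelyPresented S M' := by
  obtain ⟨n, β, hβ, hker⟩ := hM
  exact ⟨n, e.toLinearMap ∘ₗ β, e.surjective.comp hβ, by rwa [LinearEquiv.ker_comp]⟩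

theorem isSFinitelyPresented_range {V : Type*} [AddCommGroup V] [Module R V] {n : ℕ}
    (φ : (Fin n → R) →ₗ[R] V) (hφ : IsSFinite S (ker φ)) :
    IsSFinitelyPresented S (range φ) :=
  ⟨n, φ.rangeRestrict, φ.surjective_rangeRestrict, by rwa [ker_rangeRestrict]⟩

/-- A Schanuel-type argument: with `h`, `l` lifting `π` and `β` through each other, every
`x ∈ ker π` splits as `l (h x) + (x - l (h x))` with `h x ∈ ker β`. -/
theorem IsSFinitelyPresented.isSFinite_ker_of_projective {M F : Type*} [AddCommGroup M]
    [Module R M] [AddCommGroup F] [Module R F] [Module.Projective R F] [Module.Finite R F]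
    (hM : IsSFinitelyPresented S M) (π : F →ₗ[R] M) (hπ : Function.Surjective π) :
    IsSFinite S (ker π) := by
  obtain ⟨m, β, hβ, hker⟩ := hM
  obtain ⟨s, hs, B, hBβ, hBfg, hB⟩ := (isSFinite_submodule_iff S _).1 hker
  obtain ⟨h, hh⟩ := Module.projective_lifting_property β π hβ
  obtain ⟨l, hl⟩ := Module.projective_lifting_property π β hπ
  have hπl (y : Fin m → R) : π (l y) = β y := congr($hl y)
  have hβh (x : F) : β (h x) = π x := congr($hh x)
  refine (isSFinite_submodule_iff S _).2 ⟨s, hs, B.map l ⊔ range (LinearMap.id - l ∘ₗ h),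
    sup_le ?_ ?_, (hBfg.map l).sup (fg_range _), ?_⟩
  · rintro _ ⟨y, hy, rfl⟩
    rw [mem_ker, hπl]
    exact hBβ hy
  · rintro _ ⟨x, rfl⟩
    simp [hπl, hβh]
  · intro x hx
    have hhx : h x ∈ ker β := by rw [mem_ker, hβh]; exact hx
    have hsplit : s • x = l (s • h x) + (s • x - l (h (s • x))) := by
      simp only [map_smul]
      abel
    rw [hsplit]
    exact add_mem_sup (mem_map_of_mem (hB _ hhx)) (mem_range_self (LinearMap.id - l ∘ₗ h) (s • x))

theorem IsSFinitelyPresented.isSFinite_ker {M F : Type*} [AddCommGroup M] [Module R M]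
    [AddCommGroup F] [Module R F] [Module.Finite R F] (hM : IsSFinitelyPresented S M)
    (π : F →ₗ[R] M) (hπ : Function.Surjective π) : IsSFinite S (ker π) := by
  obtain ⟨k, q, hq⟩ := Module.Finite.exists_fin' R F
  have hker := hM.isSFinite_ker_of_projective S (π ∘ₗ q) (hπ.comp hq)
  have himage := isSFinite_map S q hker
  rwa [ker_comp, map_comap_eq_of_surjective hq] at himage

theorem isSFinite_ker_of_isSFinitelyPresented_range {V F : Type*} [AddCommGroup V] [Module R V]
    [AddCommGroup F] [Module R F] [Module.Finite R F] (φ : F →ₗ[R] V)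
    (hφ : IsSFinitelyPresented S (range φ)) : IsSFinite S (ker φ) := by
  have hker := hφ.isSFinite_ker S φ.rangeRestrict φ.surjective_rangeRestrict
  rwa [ker_rangeRestrict] at hker

theorem isSFinite_ker_of_isSFinite_ker_domRestrict {V W : Type*} [AddCommGroup V] [Module R V]
    [AddCommGroup W] [Module R W] (φ : V →ₗ[R] W) (K : Submodule R V) {s₁ : R} (hs₁ : s₁ ∈ S)
    (hK : ∀ x ∈ ker φ, s₁ • x ∈ K) (hφK : IsSFinite S (ker (φ.domRestrict K))) :
    IsSFinite S (ker φ) := by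
  obtain ⟨s₂, hs₂, C, hCker, hCfg, hC⟩ := (isSFinite_submodule_iff S _).1 hφK
  refine (isSFinite_submodule_iff S _).2
    ⟨s₂ * s₁, S.mul_mem hs₂ hs₁, C.map K.subtype, ?_, hCfg.map _, fun x hx => ?_⟩
  · rintro _ ⟨y, hy, rfl⟩
    exact hCker hy
  · have hxK : (⟨s₁ • x, hK x hx⟩ : K) ∈ ker (φ.domRestrict K) := by
      simp [show φ x = 0 from hx]
    rw [mul_smul]
    exact ⟨_, hC _ hxK, rfl⟩

theorem isSFinitelyPresented_of_le_range {P N : Type*} [AddCommGroup P] [Module R P]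
    [AddCommGroup N] [Module R N]
    {f : P →ₗ[R] N} (hf : Function.Injective f)
    (hP : ∀ Q : Submodule R P, Q.FG → IsSFinitelyPresented S Q)
    {W : Submodule R N} (hW : W.FG) (hWf : W ≤ range f) : IsSFinitelyPresented S W := by
  have hmap : (W.comap f).map f = W := map_comap_eq_self hWf
  have hQ : (W.comap f).FG := fg_of_fg_map_injective f hf (by rwa [hmap])
  exact IsSFinitelyPresented.of_linearEquiv S
    ((equivMapOfInjective f hf _).trans (LinearEquiv.ofEq _ _ hmap)) (hP _ hQ)

end SFinite

theorem scoherent_middle_of_ses {R : Type*} [CommRing R] (S : Submonoid R)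
    {P N M : Type*} [AddCommGroup P] [Module R P] [AddCommGroup N] [Module R N]
    [AddCommGroup M] [Module R M]
    (f : P →ₗ[R] N) (g : N →ₗ[R] M)
    (hf : Function.Injective f) (hg : Function.Surjective g) (hfg : Function.Exact f g)
    (hM : IsSCoherentModule S M) (hP : IsSCoherentModule S P) : IsSCoherentModule S N := by
  have := hM.1
  have := hP.1
  refine ⟨Module.Finite.of_exact hfg hg, fun L hL => ?_⟩
  obtain ⟨n, φ, rfl⟩ := (fg_iff_exists_fin_linearMap R N).1 hL
  refine isSFinitelyPresented_range S φ ?_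
  have hgφ : IsSFinite S (ker (g ∘ₗ φ)) := by
    refine isSFinite_ker_of_isSFinitelyPresented_range S _ (hM.2 _ ?_)
    rw [range_comp]
    exact hL.map g
  obtain ⟨s₁, hs₁, K, hKker, hKfg, hK⟩ := (isSFinite_submodule_iff S _).1 hgφ
  refine isSFinite_ker_of_isSFinite_ker_domRestrict S φ K hs₁
    (fun x hx => hK x (ker_le_ker_comp φ g hx)) ?_
  have := Module.Finite.iff_fg.2 hKfg
  refine isSFinite_ker_of_isSFinitelyPresented_range S _
    (isSFinitelyPresented_of_le_range S hf hP.2 (fg_range _) ?_)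
  rintro _ ⟨⟨x, hxK⟩, rfl⟩
  exact hfg.linearMap_ker_eq ▸ hKker hxK
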